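/- arXiv:1101.0289 — 3 statements merged into one kernel-verified Lean document; each statement's English description precedes it below -/
import Mathlib

section
/- Let D be a finite set, k a positive integer, and X ⊆ D^k a subset invariant under the action of S_k permuting coordinates (symmetric). For τ ∈ S_k, let X_τ be the set of tuples in X whose coordinates are constant on each cycle of τ; |X_τ| depends only on the cycle type of τ. Then the number of elements of X with pairwise distinct coordinates equals Σ_{(c_1,…,c_k): Σ i·c_i = k} (−1)^{k − Σ c_i} · N(c_1,…,c_k) · |X_τ|, where the sum is over cycle types, τ is any permutation of type (c_1,…,c_k), and N(c_1,…,c_k) is the number of permutations in S_k of that type. -/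
/-!
For `x : Fin k → D`, the signs over the stabilizer `{τ | x ∘ τ = x}` sum to `1` if `x` is
injective and to `0` otherwise: a transposition of two equal coordinates is a sign-reversing
involution of the stabilizer. Summing over `x ∈ X` gives
`#{x ∈ X injective} = ∑_τ sign τ · |X_τ|`. Then `sign τ = (-1)^(k - #cycles)` (fixed points
counted as cycles), and by symmetry of `X` the size `|X_τ|` is constant on conjugacy classes,
i.e. on cycle types, so the sum over `S_k` collapses to a sum over partitions of `k`.
-/

/-- The full cycle type of a permutation of `Fin k`: the multiset of lengths of all its
disjoint cycles, including fixed points as cycles of length one. -/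
def fullCycleType {k : ℕ} (τ : Equiv.Perm (Fin k)) : Multiset ℕ :=
  τ.cycleType + Multiset.replicate (Finset.univ.filter fun i => τ i = i).card 1

open Equiv Finset

namespace Equiv.Perm

/- The decidability of `∀ i, x (τ i) = x i` is an instance argument throughout: for `α = Fin k`
Lean finds `Nat.decidableForallFin`, not the `Fintype` instance, and the two are not
syntactically equal. -/

theorem card_filter_fixed_eq_of_isConj {α D : Type*} {X : Finset (α → D)} {σ τ : Perm α}
    [DecidablePred fun x : α → D => ∀ i, x (σ i) = x i]
    [DecidablePred fun x : α → D => ∀ i, x (τ i) = x i]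
    (hX : ∀ (ρ : Perm α) (x : α → D), x ∈ X → x ∘ ρ ∈ X) (h : IsConj σ τ) :
    #(X.filter fun x => ∀ i, x (σ i) = x i) = #(X.filter fun x => ∀ i, x (τ i) = x i) := by
  obtain ⟨c, rfl⟩ := isConj_iff.1 h
  refine card_nbij' (· ∘ ⇑c⁻¹) (· ∘ c) ?_ ?_ (fun x _ => by ext; simp) (fun y _ => by ext; simp)
  · intro x hx
    rw [Finset.mem_coe, Finset.mem_filter] at hx ⊢
    exact ⟨hX c⁻¹ x hx.1, fun i => by simpa using hx.2 (c⁻¹ i)⟩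
  · intro y hy
    rw [Finset.mem_coe, Finset.mem_filter] at hy ⊢
    exact ⟨hX c y hy.1, fun i => by simpa using hy.2 (c i)⟩

section Fintype

variable {α : Type*} [Fintype α] [DecidableEq α]

theorem sign_eq_neg_one_pow_card_sub_card_parts_partition (σ : Perm α) :
    sign σ = (-1) ^ (Fintype.card α - Multiset.card σ.partition.parts) := by
  have hle : Multiset.card σ.cycleType ≤ σ.cycleType.sum := by
    simpa using Multiset.card_nsmul_le_sum fun n hn => (one_lt_of_mem_cycleType hn).le
  have hsum := sum_cycleType_le σ
  obtain ⟨m, hm⟩ := Nat.exists_eq_add_of_le hle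
  have hexp : Fintype.card α - Multiset.card σ.partition.parts = m := by
    rw [parts_partition, Multiset.card_add, Multiset.card_replicate, ← sum_cycleType]
    omega
  rw [sign_of_cycleType, hexp, hm, add_right_comm, ← two_mul, pow_add, pow_mul]
  simp

theorem sum_sign_stabilizer {D : Type*} [DecidableEq D] (x : α → D)
    [DecidablePred fun τ : Perm α => ∀ i, x (τ i) = x i] :
    ∑ τ ∈ univ.filter (fun τ : Perm α => ∀ i, x (τ i) = x i), (sign τ : ℤ)
      = if Function.Injective x then 1 else 0 := by
  split_ifs with hinj
  · have hstab : univ.filter (fun τ : Perm α => ∀ i, x (τ i) = x i) = {1} := by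
      ext τ
      simpa using ⟨fun h => Equiv.ext fun i => hinj (h i), fun h i => by simp [h]⟩
    simp [hstab]
  · obtain ⟨i, j, hxij, hij⟩ := Function.not_injective_iff.1 hinj
    have hswap : ∀ m, x (swap i j m) = x m := fun m => by
      rw [swap_apply_def]; split_ifs <;> simp_all
    refine sum_involution (fun τ _ => swap i j * τ) (fun τ _ => ?_) (fun τ _ _ h => ?_)
      (fun τ hτ => ?_) (fun τ _ => swap_mul_self_mul i j τ)
    · simp [sign_swap hij]
    · exact hij (swap_eq_one_iff.1 (mul_eq_right.1 h))
    · simp_all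

theorem sum_sign_mul_card_filter_fixed {D : Type*} [DecidableEq D]
    [∀ τ : Perm α, DecidablePred fun x : α → D => ∀ i, x (τ i) = x i] (X : Finset (α → D)) :
    ∑ τ : Perm α, (sign τ : ℤ) * #(X.filter fun x => ∀ i, x (τ i) = x i)
      = #(X.filter Function.Injective) := by
  calc ∑ τ : Perm α, (sign τ : ℤ) * #(X.filter fun x => ∀ i, x (τ i) = x i)
      = ∑ τ : Perm α, ∑ x ∈ X, if ∀ i, x (τ i) = x i then (sign τ : ℤ) else 0 := by
        simp only [sum_ite, sum_const_zero, add_zero, sum_const, nsmul_eq_mul, mul_comm]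
    _ = ∑ x ∈ X, ∑ τ ∈ univ.filter (fun τ : Perm α => ∀ i, x (τ i) = x i), (sign τ : ℤ) := by
        rw [sum_comm]; simp only [sum_filter]
    _ = #(X.filter Function.Injective) := by
        simp only [sum_sign_stabilizer, sum_boole]

end Fintype

end Equiv.Perm

section FullCycleType

variable {k : ℕ}

theorem fullCycleType_eq_parts_partition (τ : Perm (Fin k)) :
    fullCycleType τ = τ.partition.parts := by
  rw [fullCycleType, Perm.parts_partition, ← card_compl]
  congr 3
  ext i
  simp [Perm.mem_support]

def fullCyclePartition (τ : Perm (Fin k)) : k.Partition where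
  parts := fullCycleType τ
  parts_pos := by rw [fullCycleType_eq_parts_partition]; exact τ.partition.parts_pos
  parts_sum := by simpa [fullCycleType_eq_parts_partition] using τ.partition.parts_sum

theorem sign_eq_neg_one_pow_sub_card_fullCycleType (τ : Perm (Fin k)) :
    Perm.sign τ = (-1) ^ (k - Multiset.card (fullCycleType τ)) := by
  simpa [fullCycleType_eq_parts_partition] using
    Perm.sign_eq_neg_one_pow_card_sub_card_parts_partition τ

theorem isConj_of_fullCycleType_eq {σ τ : Perm (Fin k)} (h : fullCycleType σ = fullCycleType τ) :
    IsConj σ τ :=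
  Perm.partition_eq_of_isConj.2 <| Nat.Partition.ext <| by
    simpa [fullCycleType_eq_parts_partition] using h

end FullCycleType

theorem li_wan_sieve_symmetric_general {D : Type*} [DecidableEq D] {k : ℕ}
    (X : Finset (Fin k → D))
    (hsym : ∀ (σ : Equiv.Perm (Fin k)) (x : Fin k → D), x ∈ X → x ∘ σ ∈ X)
    (T : Nat.Partition k → Equiv.Perm (Fin k))
    (hT : ∀ P, fullCycleType (T P) = P.parts) :
    ((X.filter fun x => Function.Injective x).card : ℤ)
      = ∑ P : Nat.Partition k,
          (-1 : ℤ) ^ (k - Multiset.card P.parts) *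
            ((Finset.univ.filter
                fun τ : Equiv.Perm (Fin k) => fullCycleType τ = P.parts).card : ℤ) *
            ((X.filter fun x => ∀ i, x (T P i) = x i).card : ℤ) := by
  rw [← Perm.sum_sign_mul_card_filter_fixed X, ← sum_fiberwise univ fullCyclePartition]
  refine sum_congr rfl fun P _ => ?_
  have hfiber : univ.filter (fun τ => fullCyclePartition τ = P)
      = univ.filter (fun τ : Perm (Fin k) => fullCycleType τ = P.parts) := by
    simp only [Nat.Partition.ext_iff, fullCyclePartition]
  have hterm : ∀ τ ∈ univ.filter (fun τ : Perm (Fin k) => fullCycleType τ = P.parts),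
      (Perm.sign τ : ℤ) * #(X.filter fun x => ∀ i, x (τ i) = x i)
        = (-1) ^ (k - Multiset.card P.parts) * #(X.filter fun x => ∀ i, x (T P i) = x i) := by
    intro τ hτ
    replace hτ := (mem_filter.1 hτ).2
    rw [sign_eq_neg_one_pow_sub_card_fullCycleType, hτ, Perm.card_filter_fixed_eq_of_isConj hsym
      (isConj_of_fullCycleType_eq (hτ.trans (hT P).symm))]
    simp
  rw [hfiber, sum_congr rfl hterm, sum_const, nsmul_eq_mul]
  ring

theorem li_wan_sieve_symmetric {D : Type*} [Fintype D] [DecidableEq D] {k : ℕ}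
    (hk : 0 < k) (X : Finset (Fin k → D))
    (hsym : ∀ (σ : Equiv.Perm (Fin k)) (x : Fin k → D), x ∈ X → x ∘ σ ∈ X)
    (T : Nat.Partition k → Equiv.Perm (Fin k))
    (hT : ∀ P, fullCycleType (T P) = P.parts) :
    ((X.filter fun x => Function.Injective x).card : ℤ)
      = ∑ P : Nat.Partition k,
          (-1 : ℤ) ^ (k - Multiset.card P.parts) *
            ((Finset.univ.filter
                fun τ : Equiv.Perm (Fin k) => fullCycleType τ = P.parts).card : ℤ) *
            ((X.filter fun x => ∀ i, x (T P i) = x i).card : ℤ) :=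
  li_wan_sieve_symmetric_general X hsym T hT
end

section
/- Let s, d, k, q be positive integers with q ≥ s and d | (q − s). Set t_i = q when d | i and t_i = s when d ∤ i, for 1 ≤ i ≤ k. Then C_k(t_1,…,t_k) ≤ (s + k + (q−s)/d − 1)_k, where (t)_k = t(t−1)⋯(t−k+1) is the falling factorial. -/
/-- `NType k c` is the number `k!/(1^{c₁}c₁!·2^{c₂}c₂!⋯k^{c_k}c_k!)` of permutations
in `S_k` having exactly `c i` cycles of length `i` (the division is exact). -/
def NType (k : ℕ) (c : ℕ → ℕ) : ℕ :=
  Nat.factorial k /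
    ∏ i ∈ Finset.range k, ((i + 1) ^ c (i + 1) * Nat.factorial (c (i + 1)))

/-!
Write `hₙ = C_n(t)/n! = ∑_{λ ⊢ n} ∏ t_{λᵢ} / z_λ`. Removing one part `i` from a partition gives
Newton's recursion `n hₙ = ∑_{i=1}^n tᵢ hₙ₋ᵢ` (the coefficientwise form of
`∑ hₙ xⁿ = exp (∑ tᵢ xⁱ / i)`). With `a = s + (q - s)/d`, the coefficients
`rₙ = a (a+1) ⋯ (a+n-1) / n!` of `(1 - x)^(-a)` satisfy the same recursion with every `tᵢ = a`.
Since `r` is nondecreasing, each multiple `i` of `d` can borrow from the `d` indices ending at `i`,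
so `∑ tᵢ rₙ₋ᵢ ≤ a ∑ rₙ₋ᵢ = n rₙ`; induction then gives `hₙ ≤ rₙ`, and `n! rₙ` is the falling
factorial `(s + n + (q-s)/d - 1)_n`.
-/

open Finset
open scoped Nat

lemma Finset.sum_Icc_one_sub_eq_sum_range {M : Type*} [AddCommMonoid M] (f : ℕ → M) (n : ℕ) :
    ∑ i ∈ Icc 1 n, f (n - i) = ∑ i ∈ range n, f i := by
  rw [← Ico_add_one_right_eq_Icc, sum_Ico_reflect f 1 le_rfl, range_eq_Ico, Nat.sub_self,
    Nat.add_sub_cancel]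

/-- Each multiple `i` of `d` in `[1, n]` is dominated, via antitonicity, by the `d` terms
`f (i - d + 1), …, f i`, and these blocks are disjoint. -/
lemma nsmul_sum_filter_dvd_le_sum {M : Type*} [AddCommMonoid M] [PartialOrder M]
    [IsOrderedAddMonoid M] {f : ℕ → M} (hf : Antitone f) (hf0 : ∀ i, 0 ≤ f i) (d n : ℕ) :
    d • ∑ i ∈ Icc 1 n with d ∣ i, f i ≤ ∑ i ∈ Icc 1 n, f i := by
  set S := {i ∈ Icc 1 n | d ∣ i}
  have hinj : Set.InjOn (fun p : ℕ × ℕ => p.1 - p.2) ↑(S ×ˢ range d) := by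
    rintro ⟨_, l⟩ hp ⟨_, l'⟩ hp' h
    simp only [S, coe_product, coe_filter, Set.mem_prod, Set.mem_ofPred_eq, mem_Icc, coe_range,
      Set.mem_Iio] at hp hp' h
    obtain ⟨⟨⟨hx1, -⟩, x, rfl⟩, hl⟩ := hp
    obtain ⟨⟨⟨hy1, -⟩, y, rfl⟩, hl'⟩ := hp'
    have hlx : l ≤ d * x := (Nat.le_mul_of_pos_right d (Nat.pos_of_mul_pos_left hx1)).trans' hl.le
    have hly : l' ≤ d * y := (Nat.le_mul_of_pos_right d (Nat.pos_of_mul_pos_left hy1)).trans' hl'.le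
    have hxy : x = y := by
      by_contra hne
      rcases Nat.lt_or_gt_of_ne hne with hxy | hxy
      all_goals
        have := Nat.mul_le_mul_left d hxy
        rw [Nat.mul_succ] at this
        omega
    subst hxy
    exact Prod.ext rfl (by simp only; omega)
  have himage : (S ×ˢ range d).image (fun p : ℕ × ℕ => p.1 - p.2) ⊆ Icc 1 n := by
    simp only [S, subset_iff, mem_image, mem_product, mem_filter, mem_Icc, mem_range]
    rintro _ ⟨⟨i, l⟩, ⟨⟨⟨hi1, hin⟩, hdi⟩, hl⟩, rfl⟩
    have := Nat.le_of_dvd hi1 hdi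
    omega
  calc d • ∑ i ∈ S, f i = ∑ p ∈ S ×ˢ range d, f p.1 := by
        rw [sum_product, smul_sum]
        simp
    _ ≤ ∑ p ∈ S ×ˢ range d, f (p.1 - p.2) := sum_le_sum fun p _ => hf (Nat.sub_le _ _)
    _ = ∑ i ∈ (S ×ˢ range d).image (fun p : ℕ × ℕ => p.1 - p.2), f i := (sum_image hinj).symm
    _ ≤ ∑ i ∈ Icc 1 n, f i := sum_le_sum_of_subset_of_nonneg himage fun i _ _ => hf0 i

namespace Multiset

/-- The number `z_λ = ∏ i ^ mᵢ * mᵢ!` (with `mᵢ` the multiplicity of `i` in `λ`), the order of the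
centralizer in `S_n` of a permutation of cycle type `λ`. -/
def zFactor (M : Multiset ℕ) : ℕ := M.prod * ∏ i ∈ M.toFinset, (M.count i)!

lemma zFactor_eq_prod (M : Multiset ℕ) :
    M.zFactor = ∏ i ∈ M.toFinset, i ^ M.count i * (M.count i)! := by
  rw [zFactor, prod_mul_distrib, prod_multiset_count]

lemma zFactor_pos {M : Multiset ℕ} (hM : 0 ∉ M) : 0 < M.zFactor :=
  Nat.mul_pos (prod_pos fun i hi => Nat.pos_of_ne_zero (by rintro rfl; exact hM hi))
    (Nat.prod_factorial_pos _ _)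

lemma prod_factorial_count_cons (i : ℕ) (M : Multiset ℕ) :
    ∏ j ∈ (i ::ₘ M).toFinset, ((i ::ₘ M).count j)! =
      (M.count i + 1) * ∏ j ∈ M.toFinset, (M.count j)! := by
  have hM : ∏ j ∈ M.toFinset, (M.count j)! = ∏ j ∈ (i ::ₘ M).toFinset, (M.count j)! :=
    prod_subset (by simp) fun j _ hj => by
      rw [count_eq_zero.2 (by simpa using hj), Nat.factorial_zero]
  have hi : i ∈ (i ::ₘ M).toFinset := by simp
  rw [hM, ← mul_prod_erase _ _ hi, ← mul_prod_erase _ (fun j => (M.count j)!) hi, count_cons_self,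
    Nat.factorial_succ, mul_assoc]
  congr 2
  exact prod_congr rfl fun j hj => by rw [count_cons_of_ne (ne_of_mem_erase hj)]

lemma zFactor_cons (i : ℕ) (M : Multiset ℕ) :
    (i ::ₘ M).zFactor = i * (M.count i + 1) * M.zFactor := by
  rw [zFactor, zFactor, prod_cons, prod_factorial_count_cons]
  ring

lemma zFactor_dvd_factorial_sum {M : Multiset ℕ} (hM : 0 ∉ M) : M.zFactor ∣ M.sum ! := by
  have hprod : M.prod ∣ (M.map (· !)).prod := by
    simpa using prod_dvd_prod_of_dvd id (· !) fun i hi =>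
      Nat.dvd_factorial (Nat.pos_of_ne_zero (by rintro rfl; exact hM hi)) le_rfl
  rw [← bell_mul_eq, erase_eq_of_notMem (by simpa using hM), zFactor, mul_assoc]
  exact Dvd.dvd.mul_left (mul_dvd_mul_right hprod _) _

end Multiset

namespace Nat.Partition

variable {n : ℕ}

@[to_additive]
lemma prod_Icc_eq_prod_toFinset {M : Type*} [CommMonoid M] (P : n.Partition) {F : ℕ → M}
    (hF : ∀ i ∉ P.parts, F i = 1) : ∏ i ∈ Icc 1 n, F i = ∏ i ∈ P.parts.toFinset, F i := by
  refine (prod_subset (fun i hi => ?_) fun i _ hi => hF i (by simpa using hi)).symm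
  have hi := Multiset.mem_toFinset.1 hi
  exact mem_Icc.2 ⟨P.parts_pos hi, P.le_of_mem_parts hi⟩

lemma sum_Icc_mul_count (P : n.Partition) : ∑ i ∈ Icc 1 n, i * P.parts.count i = n := by
  rw [P.sum_Icc_eq_sum_toFinset fun i hi => by simp [Multiset.count_eq_zero.2 hi]]
  simpa [sum_multiset_count, mul_comm] using P.parts_sum

lemma zero_notMem_parts (P : n.Partition) : 0 ∉ P.parts := fun h => (P.parts_pos h).false

lemma zFactor_parts_dvd_factorial (P : n.Partition) : P.parts.zFactor ∣ n ! := by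
  simpa [P.parts_sum] using Multiset.zFactor_dvd_factorial_sum P.zero_notMem_parts

lemma prod_range_eq_prod_toFinset {M : Type*} [CommMonoid M] (P : n.Partition) {F : ℕ → M}
    (hF : ∀ i ∉ P.parts, F i = 1) : ∏ i ∈ range n, F (i + 1) = ∏ i ∈ P.parts.toFinset, F i := by
  rw [range_eq_Ico, prod_Ico_add' F 0 n 1, zero_add, Ico_add_one_right_eq_Icc,
    P.prod_Icc_eq_prod_toFinset hF]

lemma NType_count_parts (P : n.Partition) :
    NType n (fun i => P.parts.count i) = n ! / P.parts.zFactor := by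
  rw [NType, P.prod_range_eq_prod_toFinset (F := fun i => i ^ P.parts.count i * (P.parts.count i)!)
    fun i hi => by simp [Multiset.count_eq_zero.2 hi], Multiset.zFactor_eq_prod]

lemma prod_range_pow_count_parts {M : Type*} [CommMonoid M] (P : n.Partition) (t : ℕ → M) :
    ∏ i ∈ range n, t (i + 1) ^ P.parts.count (i + 1) = (P.parts.map t).prod := by
  rw [P.prod_range_eq_prod_toFinset (F := fun i => t i ^ P.parts.count i)
    fun i hi => by simp [Multiset.count_eq_zero.2 hi], prod_multiset_map_count]

end Nat.Partition

section CycleIndex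

variable {K : Type*} [Field K] [CharZero K]

/-- `n! * cycleIndex t n = C_n(t₁, …, tₙ)`, with the sum over `S_n` grouped by cycle type. -/
noncomputable def cycleIndex (t : ℕ → K) (n : ℕ) : K :=
  ∑ P : n.Partition, (P.parts.map t).prod / P.parts.zFactor

lemma cycleIndex_zero (t : ℕ → K) : cycleIndex t 0 = 1 := by
  simp [cycleIndex, Multiset.zFactor]

/-- Adding a part `i` to a partition multiplies `z_λ` by `i * (mᵢ + 1)`, which cancels the
weight `i * mᵢ` on the larger partition. -/
lemma sum_mul_count_div_zFactor (t : ℕ → K) {n i : ℕ} (hi : i ∈ Icc 1 n) :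
    ∑ P : n.Partition, (i * P.parts.count i : K) * ((P.parts.map t).prod / P.parts.zFactor) =
      t i * cycleIndex t (n - i) := by
  classical
  obtain ⟨hi1, hin⟩ := mem_Icc.1 hi
  rw [← sum_filter_of_ne (p := fun P : n.Partition => i ∈ P.parts) fun P _ h => ?_,
    sum_subtype _ fun P => mem_filter_univ P,
    ← (Nat.Partition.partitionWithPartEquiv hi1 hin).symm.sum_comp, cycleIndex, mul_sum]
  · refine sum_congr rfl fun Q _ => ?_
    have hz : (Q.parts.zFactor : K) ≠ 0 := by
      exact_mod_cast (Multiset.zFactor_pos Q.zero_notMem_parts).ne'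
    have hi0 : (i : K) ≠ 0 := by exact_mod_cast (show i ≠ 0 by omega)
    simp only [Nat.Partition.partitionWithPartEquiv_symm_apply_parts, Multiset.map_cons,
      Multiset.prod_cons, Multiset.zFactor_cons, Multiset.count_cons_self]
    push_cast
    field_simp
  · by_contra hiP
    simp [Multiset.count_eq_zero.2 hiP] at h

theorem natCast_mul_cycleIndex (t : ℕ → K) (n : ℕ) :
    n * cycleIndex t n = ∑ i ∈ Icc 1 n, t i * cycleIndex t (n - i) := by
  have hn (P : n.Partition) : (n : K) = ∑ i ∈ Icc 1 n, (i * P.parts.count i : K) := by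
    exact_mod_cast P.sum_Icc_mul_count.symm
  rw [cycleIndex, mul_sum, sum_congr rfl fun P _ => by rw [hn P, sum_mul], sum_comm]
  exact sum_congr rfl fun i hi => sum_mul_count_div_zFactor t hi

lemma succ_mul_ascFactorial_div_factorial_succ (a n : ℕ) :
    (n + 1 : K) * (a.ascFactorial (n + 1) / (n + 1)! : K) =
      (a + n) * (a.ascFactorial n / n ! : K) := by
  push_cast [Nat.ascFactorial_succ, Nat.factorial_succ]
  field_simp

lemma natCast_mul_sum_ascFactorial_div_factorial (a n : ℕ) :
    a * ∑ i ∈ Icc 1 n, (a.ascFactorial (n - i) / (n - i)! : K) =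
      n * (a.ascFactorial n / n ! : K) := by
  rw [sum_Icc_one_sub_eq_sum_range (fun j => (a.ascFactorial j / j ! : K))]
  induction n with
  | zero => simp
  | succ n ih =>
    rw [sum_range_succ, mul_add, ih, Nat.cast_succ, succ_mul_ascFactorial_div_factorial_succ]
    ring

end CycleIndex

lemma natCast_sum_NType_mul_prod_pow_count {K : Type*} [Field K] [CharZero K] (t : ℕ → ℕ)
    (n : ℕ) :
    ((∑ P : n.Partition, NType n (fun i => P.parts.count i) *
        ∏ i ∈ range n, t (i + 1) ^ P.parts.count (i + 1) : ℕ) : K) =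
      n ! * cycleIndex (fun i => (t i : K)) n := by
  rw [cycleIndex, mul_sum, Nat.cast_sum]
  refine sum_congr rfl fun P _ => ?_
  rw [P.NType_count_parts, P.prod_range_pow_count_parts, Nat.cast_mul,
    Nat.cast_div P.zFactor_parts_dvd_factorial
      (by exact_mod_cast (Multiset.zFactor_pos P.zero_notMem_parts).ne'),
    Nat.cast_multiset_prod, Multiset.map_map, Function.comp_def]
  ring

section Comparison

variable {K : Type*} [Field K] [LinearOrder K] [IsStrictOrderedRing K]

lemma sum_ite_dvd_mul_le {f : ℕ → K} (hf : Antitone f) (hf0 : ∀ i, 0 ≤ f i) (d n : ℕ)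
    (s : K) {m : K} (hm : 0 ≤ m) :
    ∑ i ∈ Icc 1 n, (if d ∣ i then s + d * m else s) * f i ≤ (s + m) * ∑ i ∈ Icc 1 n, f i := by
  have hsplit : ∑ i ∈ Icc 1 n, (if d ∣ i then s + d * m else s) * f i =
      s * ∑ i ∈ Icc 1 n, f i + m * (d • ∑ i ∈ Icc 1 n with d ∣ i, f i) := by
    rw [nsmul_eq_mul, sum_filter, mul_sum, mul_sum, mul_sum, ← sum_add_distrib]
    refine sum_congr rfl fun i _ => ?_
    split_ifs <;> ring
  rw [hsplit, add_mul]
  gcongr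
  exact nsmul_sum_filter_dvd_le_sum hf hf0 d n

theorem le_of_mul_le_sum_of_sum_le_mul {t h r : ℕ → K} (ht : ∀ i, 0 ≤ t i) (h0 : h 0 ≤ r 0)
    (hh : ∀ n, n * h n ≤ ∑ i ∈ Icc 1 n, t i * h (n - i))
    (hr : ∀ n, ∑ i ∈ Icc 1 n, t i * r (n - i) ≤ n * r n) (n : ℕ) : h n ≤ r n := by
  induction n using Nat.strong_induction_on with
  | _ n ih =>
  rcases n.eq_zero_or_pos with rfl | hn
  · exact h0
  refine le_of_mul_le_mul_left ?_ (Nat.cast_pos.2 hn : (0 : K) < n)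
  calc (n : K) * h n ≤ ∑ i ∈ Icc 1 n, t i * h (n - i) := hh n
    _ ≤ ∑ i ∈ Icc 1 n, t i * r (n - i) :=
        sum_le_sum fun i hi => mul_le_mul_of_nonneg_left (ih _ (by grind)) (ht i)
    _ ≤ n * r n := hr n

lemma monotone_ascFactorial_div_factorial {a : ℕ} (ha : 0 < a) :
    Monotone fun n => (a.ascFactorial n / n ! : K) := by
  refine monotone_nat_of_le_succ fun n => ?_
  have hn : (0 : K) < n + 1 := by positivity
  refine le_of_mul_le_mul_left ?_ hn
  rw [succ_mul_ascFactorial_div_factorial_succ]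
  have : (1 : K) ≤ a := by exact_mod_cast ha
  exact mul_le_mul_of_nonneg_right (by linarith) (by positivity)

theorem cycleIndex_ite_dvd_le (d n : ℕ) {s m : ℕ} (hsm : 0 < s + m) :
    cycleIndex (fun i => if d ∣ i then (s + d * m : K) else s) n ≤
      ((s + m).ascFactorial n / n ! : K) := by
  refine le_of_mul_le_sum_of_sum_le_mul (t := fun i => if d ∣ i then (s + d * m : K) else s)
    (r := fun n => ((s + m).ascFactorial n / n ! : K))
    (fun i => by split_ifs <;> positivity) (by simp [cycleIndex_zero])
    (fun n => (natCast_mul_cycleIndex _ n).le) (fun n => ?_) n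
  have hr := monotone_ascFactorial_div_factorial (K := K) hsm
  calc _ ≤ (s + m : K) * ∑ i ∈ Icc 1 n, ((s + m).ascFactorial (n - i) / (n - i)! : K) :=
        sum_ite_dvd_mul_le (fun i j hij => hr (Nat.sub_le_sub_left hij n))
          (fun i => by positivity) d n _ (Nat.cast_nonneg m)
    _ = n * ((s + m).ascFactorial n / n ! : K) := by
        exact_mod_cast natCast_mul_sum_ascFactorial_div_factorial (s + m) n

end Comparison

theorem generating_function_periodic_values_bound_general (s d k q : ℕ)
    (hs : 0 < s) (hqs : s ≤ q) (hdvd : d ∣ q - s) :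
    ∑ P : Nat.Partition k,
        NType k (fun i => Multiset.count i P.parts) *
          ∏ i ∈ Finset.range k,
            (if d ∣ (i + 1) then q else s) ^ Multiset.count (i + 1) P.parts
      ≤ Nat.descFactorial (s + k + (q - s) / d - 1) k := by
  set m := (q - s) / d
  have hq : (q : ℚ) = s + d * m := by
    rw [← Nat.cast_mul, Nat.mul_div_cancel' hdvd]
    push_cast [hqs]
    ring
  have hweights : (fun i => ((if d ∣ i then q else s : ℕ) : ℚ)) =
      fun i => if d ∣ i then (s + d * m : ℚ) else s := by
    ext i
    split_ifs <;> simp [hq]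
  rw [← Nat.cast_le (α := ℚ),
    natCast_sum_NType_mul_prod_pow_count (fun i => if d ∣ i then q else s), hweights, show s + k + m - 1 = s + m + k - 1 by omega, Nat.add_descFactorial_eq_ascFactorial',
    ← mul_div_cancel_left₀ ((s + m).ascFactorial k : ℚ) (Nat.cast_ne_zero.2 k.factorial_ne_zero),
    mul_div_assoc]
  gcongr
  exact cycleIndex_ite_dvd_le d k (Nat.add_pos_left hs m)

theorem generating_function_periodic_values_bound (s d k q : ℕ)
    (hs : 0 < s) (hd : 0 < d) (hk : 0 < k) (hq : 0 < q)
    (hqs : s ≤ q) (hdvd : d ∣ q - s) :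
    ∑ P : Nat.Partition k,
        NType k (fun i => Multiset.count i P.parts) *
          ∏ i ∈ Finset.range k,
            (if d ∣ (i + 1) then q else s) ^ Multiset.count (i + 1) P.parts
      ≤ Nat.descFactorial (s + k + (q - s) / d - 1) k :=
  generating_function_periodic_values_bound_general s d k q hs hqs hdvd
end

section
/- Let F_q be a finite field, d_1,…,d_n positive integers, and b, a_1,…,a_n ∈ F_q^*. Let N* be the number of solutions (x_1,…,x_n) ∈ (F_q^*)^n of a_1·x_1^{d_1} + ⋯ + a_n·x_n^{d_n} = b. Then |N* − (1/q)·[(q−1)^n − (−1)^n]| ≤ Σ_{e=0}^{n−1} Σ_{1≤i_{e+1}<i_{e+2}<⋯<i_n≤n} (∏_{j=e+1}^{n} (gcd(d_{i_j}, q−1) − 1)) · (√q)^{n−e−1}. In particular, if d_i = m | (q−1) for all i, then |N* − (1/q)·[(q−1)^n − (−1)^n]| < (1 + (m−1)√q)^n / √q. -/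
/-!
Detecting the equation with a primitive additive character `ψ` writes `q N*` as a sum over
`t ∈ F` of `ψ(-tb)` times the product of the one-variable sums `∑_{y ≠ 0} ψ(t aᵢ y^dᵢ)`; the
term `t = 0` contributes `(q - 1)^n`. If `χᵢ` has order `gᵢ = gcd(dᵢ, q - 1)`, then
`χᵢ^0, …, χᵢ^(gᵢ-1)` are exactly the characters trivial on the `dᵢ`-th powers, so for `t ≠ 0`
each one-variable sum is `∑_{k < gᵢ} χᵢ^(-k)(t aᵢ) G(χᵢ^k)` with `G` the Gauss sum. Expanding
the product and summing over `t` first, every exponent vector `k` contributes a product of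
Gauss sums (of modulus `1` where `kᵢ = 0` and `√q` otherwise) times one more Gauss sum of
modulus at most `√q`. The vector `k = 0` gives the rest of the main term, `-(-1)^n`, and the
others add up to at most `√q (∏ (1 + (gᵢ - 1) √q) - 1)`, which is `q` times the stated bound.
-/

open scoped Classical

open Finset

lemma AddChar.map_sum_eq_prod {A M ι : Type*} [AddCommMonoid A] [CommMonoid M]
    (ψ : AddChar A M) (s : Finset ι) (f : ι → A) :
    ψ (∑ i ∈ s, f i) = ∏ i ∈ s, ψ (f i) := by
  induction s using Finset.cons_induction with
  | empty => simp
  | cons i s hi ih => rw [sum_cons, map_add_eq_mul, ih, prod_cons]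

lemma AddChar.IsPrimitive.ne_one {R R' : Type*} [CommRing R] [Nontrivial R] [CommMonoid R']
    {ψ : AddChar R R'} (hψ : ψ.IsPrimitive) : ψ ≠ 1 := by
  simpa using hψ one_ne_zero

lemma MulChar.norm_apply_units {R : Type*} [CommRing R] [Fintype Rˣ] (χ : MulChar R ℂ)
    (a : Rˣ) : ‖χ a‖ = 1 :=
  Complex.norm_eq_one_of_mem_rootsOfUnity (χ.apply_mem_rootsOfUnity a)

lemma MulChar.prod_apply_coe {R R' ι : Type*} [CommMonoid R] [CommRing R'] (s : Finset ι)
    (φ : ι → MulChar R R') (u : Rˣ) : (∏ i ∈ s, φ i) u = ∏ i ∈ s, φ i u := by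
  induction s using Finset.cons_induction with
  | empty => simp
  | cons i s hi ih => rw [prod_cons, MulChar.coeToFun_mul, Pi.mul_apply, ih, prod_cons]

namespace MulChar

variable {R R' : Type*} [CommMonoid R] [CommRing R'] [IsCyclic Rˣ]

lemma orderOf_eq_natCard_range_toUnitHom (χ : MulChar R R') :
    orderOf χ = Nat.card χ.toUnitHom.range := by
  obtain ⟨γ, hγ⟩ := IsCyclic.exists_generator (α := Rˣ)
  have hrange : χ.toUnitHom.range = Subgroup.zpowers (χ.toUnitHom γ) := by
    rw [MonoidHom.range_eq_map, ← (Subgroup.eq_top_iff' _).mpr hγ, MonoidHom.map_zpowers]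
  rw [hrange, Nat.card_zpowers, orderOf_eq_orderOf_iff]
  intro k
  rw [eq_iff hγ, pow_apply_coe, one_apply_coe, Units.ext_iff, Units.val_pow_eq_pow_val,
    coe_toUnitHom, Units.val_one]

/-- The `d`-th powers lie in the kernel, and both subgroups have index `gcd(#Rˣ, d)`. -/
lemma ker_toUnitHom_eq_range_powMonoidHom [Finite Rˣ] {χ : MulChar R R'} {d : ℕ}
    (hχ : orderOf χ = (Nat.card Rˣ).gcd d) :
    χ.toUnitHom.ker = (powMonoidHom d : Rˣ →* Rˣ).range := by
  have hdvd : orderOf χ ∣ d := hχ ▸ Nat.gcd_dvd_right _ _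
  have hle : (powMonoidHom d : Rˣ →* Rˣ).range ≤ χ.toUnitHom.ker := by
    rintro _ ⟨y, rfl⟩
    rw [MonoidHom.mem_ker, powMonoidHom_apply, map_pow, Units.ext_iff, Units.val_pow_eq_pow_val,
      coe_toUnitHom, ← pow_apply_coe, orderOf_dvd_iff_pow_eq_one.mp hdvd, one_apply_coe,
      Units.val_one]
  refine (Subgroup.eq_of_le_of_card_ge hle ?_).symm
  have hker := χ.toUnitHom.ker.card_mul_index
  rw [Subgroup.index_ker, ← orderOf_eq_natCard_range_toUnitHom, hχ] at hker
  rw [IsCyclic.card_powMonoidHom_range,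
    Nat.le_div_iff_mul_le (Nat.gcd_pos_of_pos_left _ Nat.card_pos), hker]

lemma card_pow_eq_eq_sum_pow {K : Type*} [Field K] [Fintype Rˣ] {χ : MulChar R K} {d : ℕ}
    (hχ : orderOf χ = (Nat.card Rˣ).gcd d) (u : Rˣ) :
    (#{y | y ^ d = u} : K) = ∑ k ∈ range (orderOf χ), χ u ^ k := by
  have hmem : u ∈ (powMonoidHom d : Rˣ →* Rˣ).range ↔ χ u = 1 := by
    rw [← ker_toUnitHom_eq_range_powMonoidHom hχ, MonoidHom.mem_ker, Units.ext_iff,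
      coe_toUnitHom, Units.val_one]
  by_cases hu : χ u = 1
  · have hfiber : #{y | y ^ d = u} = #{y : Rˣ | y ^ d = 1} :=
      MonoidHom.card_fiber_eq_of_mem_range (powMonoidHom d : Rˣ →* Rˣ) (hmem.mpr hu) ⟨1, one_pow d⟩
    have hker : #{y : Rˣ | y ^ d = 1} = orderOf χ := by
      rw [hχ, ← IsCyclic.card_powMonoidHom_ker, Nat.card_eq_fintype_card, Fintype.card_subtype]
      simp only [MonoidHom.mem_ker, powMonoidHom_apply]
    simp [hu, hfiber, hker]
  · have hfiber : #{y | y ^ d = u} = 0 := by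
      rw [card_eq_zero, filter_eq_empty_iff]
      rintro y - rfl
      exact hu (hmem.mp ⟨y, rfl⟩)
    rw [hfiber, Nat.cast_zero, geom_sum_eq hu, ← pow_apply_coe, pow_orderOf_eq_one, one_apply_coe,
      sub_self, zero_div]

end MulChar

lemma sum_units_eq_sum_ne_zero {G M : Type*} [GroupWithZero G] [Fintype G] [Fintype Gˣ]
    [AddCommMonoid M] (h : G → M) : ∑ y : Gˣ, h y = ∑ y ∈ {y : G | y ≠ 0}, h y := by
  rw [sum_subtype (p := fun y : G => y ≠ 0) _ (fun y => by simp) h]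
  exact Fintype.sum_equiv unitsEquivNeZero _ _ fun _ => rfl

lemma abs_sub_one_div_mul_le {x y B q : ℝ} (hq : 0 < q) (h : |q * x - y| ≤ √q * B) :
    |x - 1 / q * y| ≤ B / √q := by
  have hsq : 0 < √q := Real.sqrt_pos.mpr hq
  calc |x - 1 / q * y| = |q * x - y| / q := by
        rw [eq_div_iff hq.ne', ← abs_of_pos hq, ← abs_mul, abs_of_pos hq]
        congr 1
        field_simp
    _ ≤ √q * B / q := by gcongr
    _ = B / √q := by
        rw [div_eq_div_iff hq.ne' hsq.ne', mul_comm √q B, mul_assoc, Real.mul_self_sqrt hq.le]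

section FiniteField

variable {F : Type*} [Field F] [Fintype F] {ψ : AddChar F ℂ}

lemma norm_gaussSum_of_ne_one {χ : MulChar F ℂ} (hχ : χ ≠ 1) (hψ : ψ.IsPrimitive) :
    ‖gaussSum χ ψ‖ = √(Fintype.card F) := by
  have h := gaussSum_mul_gaussSum_eq_card hχ hψ
  rw [← star_gaussSum_eq, Complex.star_def, Complex.mul_conj, ← Complex.ofReal_natCast,
    Complex.ofReal_inj] at h
  rw [Complex.norm_def, h]

lemma norm_gaussSum_one (hψ : ψ.IsPrimitive) : ‖gaussSum (1 : MulChar F ℂ) ψ‖ = 1 := by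
  rw [gaussSum_one_left hψ.ne_one, norm_neg, norm_one]

lemma norm_gaussSum_le (χ : MulChar F ℂ) (hψ : ψ.IsPrimitive) :
    ‖gaussSum χ ψ‖ ≤ √(Fintype.card F) := by
  rcases eq_or_ne χ 1 with rfl | hχ
  · rw [norm_gaussSum_one hψ, Real.one_le_sqrt]
    exact_mod_cast Fintype.card_pos
  · exact (norm_gaussSum_of_ne_one hχ hψ).le

lemma norm_gaussSum_mulShift (χ : MulChar F ℂ) {c : F} (hc : c ≠ 0) :
    ‖gaussSum χ (ψ.mulShift c)‖ = ‖gaussSum χ ψ‖ := by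
  rw [show c = (Units.mk0 c hc : F) from rfl, gaussSum_mulShift_eq, norm_mul,
    MulChar.norm_apply_units, one_mul]

lemma sum_range_orderOf_norm_gaussSum_pow (χ : MulChar F ℂ) (hψ : ψ.IsPrimitive) :
    ∑ k ∈ range (orderOf χ), ‖gaussSum (χ ^ k) ψ‖
      = 1 + ((orderOf χ : ℝ) - 1) * √(Fintype.card F) := by
  obtain ⟨g, hg⟩ := Nat.exists_eq_add_one.mpr χ.orderOf_pos
  have hne : ∀ k ∈ range g, ‖gaussSum (χ ^ (k + 1)) ψ‖ = √(Fintype.card F) := fun k hk =>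
    norm_gaussSum_of_ne_one (pow_ne_one_of_lt_orderOf k.succ_ne_zero (by simp_all)) hψ
  rw [hg, sum_range_succ', sum_congr rfl hne, pow_zero, norm_gaussSum_one hψ, sum_const,
    card_range, nsmul_eq_mul]
  push_cast
  ring

lemma sum_pow_eq_sum_sum_mulChar {χ : MulChar F ℂ} {d : ℕ}
    (hχ : orderOf χ = (Nat.card Fˣ).gcd d) (f : F → ℂ) :
    ∑ y ∈ {y : F | y ≠ 0}, f (y ^ d) = ∑ k ∈ range (orderOf χ), ∑ u, (χ ^ k) u * f u := by
  calc ∑ y ∈ {y : F | y ≠ 0}, f (y ^ d)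
      = ∑ y : Fˣ, f ↑(y ^ d) := by
        simp only [sum_units_eq_sum_ne_zero (fun y => f (y ^ d)), Units.val_pow_eq_pow_val]
    _ = ∑ u : Fˣ, #{y | y ^ d = u} * f u := by
        rw [← sum_fiberwise' univ (· ^ d) (fun u : Fˣ => f u)]
        simp
    _ = ∑ k ∈ range (orderOf χ), ∑ u : Fˣ, (χ ^ k) u * f u := by
        simp only [MulChar.card_pow_eq_eq_sum_pow hχ, sum_mul, MulChar.pow_apply_coe]
        exact sum_comm
    _ = ∑ k ∈ range (orderOf χ), ∑ u, (χ ^ k) u * f u := by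
        refine sum_congr rfl fun k _ => ?_
        rw [sum_units_eq_sum_ne_zero (fun u => (χ ^ k) u * f u)]
        exact sum_filter_of_ne fun u _ hu h0 => hu (by rw [h0, MulChar.map_zero, zero_mul])

lemma sum_addChar_mul_pow_eq_sum_gaussSum {χ : MulChar F ℂ} {d : ℕ}
    (hχ : orderOf χ = (Nat.card Fˣ).gcd d) {c : F} (hc : c ≠ 0) :
    ∑ y ∈ {y : F | y ≠ 0}, ψ (c * y ^ d)
      = ∑ k ∈ range (orderOf χ), (χ ^ k)⁻¹ c * gaussSum (χ ^ k) ψ := by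
  rw [sum_pow_eq_sum_sum_mulChar hχ (fun u => ψ (c * u))]
  refine sum_congr rfl fun k _ => ?_
  rw [show c = (Units.mk0 c hc : F) from rfl, ← gaussSum_mulShift_eq]
  rfl

lemma card_mul_card_filter_eq_sum_addChar (hψ : ψ.IsPrimitive) {α : Type*}
    (s : Finset α) (f : α → F) (b : F) :
    (Fintype.card F : ℂ) * #{x ∈ s | f x = b} = ∑ t, ∑ x ∈ s, ψ (t * (f x - b)) := by
  rw [sum_comm]
  simp only [AddChar.sum_mulShift _ hψ, sub_eq_zero]
  push_cast
  rw [sum_ite, sum_const_zero, add_zero, sum_const, nsmul_eq_mul, mul_comm]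

lemma exists_mulChar_orderOf_gcd (d : ℕ) : ∃ χ : MulChar F ℂ, orderOf χ = (Nat.card Fˣ).gcd d :=
  MulChar.exists_mulChar_orderOf F
    (by rw [Nat.card_units, Nat.card_eq_fintype_card]; exact Nat.gcd_dvd_left _ _)
    (Complex.isPrimitiveRoot_exp _ (Nat.gcd_pos_of_pos_left _ Nat.card_pos).ne')

section Diagonal

variable {ι : Type*} [Fintype ι] [DecidableEq ι]

noncomputable def exponentBox (χ : ι → MulChar F ℂ) : Finset (ι → ℕ) :=
  Fintype.piFinset fun i => range (orderOf (χ i))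

lemma zero_mem_exponentBox (χ : ι → MulChar F ℂ) : 0 ∈ exponentBox χ :=
  Fintype.mem_piFinset.mpr fun _ => mem_range.mpr (orderOf_pos _)

noncomputable def prodInvPow (χ : ι → MulChar F ℂ) (k : ι → ℕ) : MulChar F ℂ :=
  ∏ i, (χ i ^ k i)⁻¹

noncomputable def gaussProd (ψ : AddChar F ℂ) (χ : ι → MulChar F ℂ) (a : ι → F) (k : ι → ℕ) : ℂ :=
  ∏ i, (χ i ^ k i)⁻¹ (a i) * gaussSum (χ i ^ k i) ψ

lemma card_mul_card_diagonal_eq (hψ : ψ.IsPrimitive) (a : ι → F)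
    (d : ι → ℕ) (b : F) :
    (Fintype.card F : ℂ) * #{x : ι → F | (∀ i, x i ≠ 0) ∧ ∑ i, a i * x i ^ d i = b}
      = ((Fintype.card F : ℂ) - 1) ^ Fintype.card ι
        + ∑ t ∈ {t : F | t ≠ 0},
            ψ (-(t * b)) * ∏ i, ∑ y ∈ {y : F | y ≠ 0}, ψ (t * a i * y ^ d i) := by
  have hT : ({x : ι → F | ∀ i, x i ≠ 0} : Finset _)
      = Fintype.piFinset fun _ => {y : F | y ≠ 0} := by
    ext; simp
  have hinner : ∀ t, ∑ x ∈ Fintype.piFinset (fun _ => {y : F | y ≠ 0}),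
      ψ (t * (∑ i, a i * x i ^ d i - b))
        = ψ (-(t * b)) * ∏ i, ∑ y ∈ {y : F | y ≠ 0}, ψ (t * a i * y ^ d i) := by
    intro t
    rw [prod_univ_sum, mul_sum]
    refine sum_congr rfl fun x _ => ?_
    rw [← AddChar.map_sum_eq_prod, ← AddChar.map_add_eq_mul, mul_sub, mul_sum, sub_eq_neg_add]
    simp only [mul_assoc]
  have hcard : (#{y : F | y ≠ 0} : ℂ) = (Fintype.card F : ℂ) - 1 := by
    rw [filter_ne', card_erase_of_mem (mem_univ 0), card_univ, Nat.cast_sub Fintype.card_pos,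
      Nat.cast_one]
  rw [← filter_filter, hT, card_mul_card_filter_eq_sum_addChar hψ, ← add_sum_erase _ _ (mem_univ 0),
    ← filter_ne', hinner]
  simp only [hinner, zero_mul, neg_zero, AddChar.map_zero_eq_one, sum_const, nsmul_eq_mul, mul_one,
    one_mul, prod_const, hcard, card_univ]

variable {χ : ι → MulChar F ℂ} {a : ι → F}

lemma prod_sum_addChar_mul_pow_eq {d : ι → ℕ} (hχ : ∀ i, orderOf (χ i) = (Nat.card Fˣ).gcd (d i))
    (ha : ∀ i, a i ≠ 0) {t : F} (ht : t ≠ 0) :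
    ∏ i, ∑ y ∈ {y : F | y ≠ 0}, ψ (t * a i * y ^ d i)
      = ∑ k ∈ exponentBox χ, prodInvPow χ k t * gaussProd ψ χ a k := by
  simp_rw [sum_addChar_mul_pow_eq_sum_gaussSum (hχ _) (mul_ne_zero ht (ha _)), prod_univ_sum,
    exponentBox]
  refine sum_congr rfl fun k _ => ?_
  rw [prodInvPow, gaussProd, show t = (Units.mk0 t ht : F) from rfl, MulChar.prod_apply_coe,
    ← prod_mul_distrib]
  simp only [map_mul, mul_assoc]

lemma card_mul_card_diagonal_sub_eq (hψ : ψ.IsPrimitive) {d : ι → ℕ}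
    (hχ : ∀ i, orderOf (χ i) = (Nat.card Fˣ).gcd (d i)) (ha : ∀ i, a i ≠ 0) {b : F} (hb : b ≠ 0) :
    (Fintype.card F : ℂ) * #{x : ι → F | (∀ i, x i ≠ 0) ∧ ∑ i, a i * x i ^ d i = b}
        - (((Fintype.card F : ℂ) - 1) ^ Fintype.card ι - (-1) ^ Fintype.card ι)
      = ∑ k ∈ (exponentBox χ).erase 0,
          gaussProd ψ χ a k * gaussSum (prodInvPow χ k) (ψ.mulShift (-b)) := by
  have hexpand : ∑ t ∈ {t : F | t ≠ 0},
        ψ (-(t * b)) * ∏ i, ∑ y ∈ {y : F | y ≠ 0}, ψ (t * a i * y ^ d i)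
      = ∑ k ∈ exponentBox χ,
          gaussProd ψ χ a k * gaussSum (prodInvPow χ k) (ψ.mulShift (-b)) := by
    rw [sum_congr rfl fun t ht => by rw [prod_sum_addChar_mul_pow_eq hχ ha (mem_filter.mp ht).2]]
    simp only [mul_sum]
    rw [sum_comm]
    refine sum_congr rfl fun k _ => ?_
    rw [gaussSum, mul_sum, ← sum_filter_of_ne (s := (univ : Finset F)) (p := (· ≠ 0))]
    · refine sum_congr rfl fun t _ => ?_
      rw [AddChar.mulShift_apply, neg_mul, mul_comm b t]
      ring
    · intro t _ h ht
      exact h (by rw [ht, MulChar.map_zero, zero_mul, mul_zero])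
  have hψ1 : ψ.mulShift (-b) ≠ 1 := hψ (neg_ne_zero.mpr hb)
  have hzero : gaussProd ψ χ a 0 * gaussSum (prodInvPow χ 0) (ψ.mulShift (-b))
      = -(-1) ^ Fintype.card ι := by
    simp only [gaussProd, prodInvPow, Pi.zero_apply, pow_zero, inv_one, prod_const_one,
      gaussSum_one_left hψ1, gaussSum_one_left hψ.ne_one,
      MulChar.one_apply (ha _).isUnit, one_mul, prod_const, card_univ]
    ring
  rw [card_mul_card_diagonal_eq hψ, hexpand, ← add_sum_erase _ _ (zero_mem_exponentBox χ), hzero]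
  ring

lemma norm_sum_gaussProd_mul_gaussSum_le (hψ : ψ.IsPrimitive) (ha : ∀ i, a i ≠ 0) {c : F}
    (hc : c ≠ 0) :
    ‖∑ k ∈ (exponentBox χ).erase 0,
        gaussProd ψ χ a k * gaussSum (prodInvPow χ k) (ψ.mulShift c)‖
      ≤ √(Fintype.card F) * (∏ i, (1 + ((orderOf (χ i) : ℝ) - 1) * √(Fintype.card F)) - 1) := by
  have hnorm : ∀ k, ‖gaussProd ψ χ a k‖ = ∏ i, ‖gaussSum (χ i ^ k i) ψ‖ := fun k => by
    rw [gaussProd, norm_prod]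
    refine prod_congr rfl fun i _ => ?_
    rw [norm_mul, show a i = (Units.mk0 (a i) (ha i) : F) from rfl, MulChar.norm_apply_units,
      one_mul]
  calc _ ≤ ∑ k ∈ (exponentBox χ).erase 0,
        √(Fintype.card F) * ∏ i, ‖gaussSum (χ i ^ k i) ψ‖ := by
        refine norm_sum_le_of_le _ fun k _ => ?_
        rw [norm_mul, hnorm, norm_gaussSum_mulShift _ hc, mul_comm]
        gcongr
        exact norm_gaussSum_le _ hψ
    _ = _ := by
        rw [← mul_sum, sum_erase_eq_sub (zero_mem_exponentBox χ), exponentBox,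
          ← prod_univ_sum (fun i => range (orderOf (χ i))) fun i k => ‖gaussSum (χ i ^ k) ψ‖]
        simp [sum_range_orderOf_norm_gaussSum_pow _ hψ, norm_gaussSum_one hψ]

theorem abs_card_diagonal_sub_le (d : ι → ℕ) (ha : ∀ i, a i ≠ 0) {b : F} (hb : b ≠ 0) :
    |(#{x : ι → F | (∀ i, x i ≠ 0) ∧ ∑ i, a i * x i ^ d i = b} : ℝ)
        - 1 / Fintype.card F
          * (((Fintype.card F : ℝ) - 1) ^ Fintype.card ι - (-1) ^ Fintype.card ι)|
      ≤ (∏ i, (1 + ((Nat.gcd (d i) (Fintype.card F - 1) : ℝ) - 1) * √(Fintype.card F)) - 1)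
          / √(Fintype.card F) := by
  choose χ hχ using fun i => exists_mulChar_orderOf_gcd (F := F) (d i)
  have hψ := AddChar.FiniteField.primitiveChar_to_Complex_isPrimitive F
  have bound := norm_sum_gaussProd_mul_gaussSum_le (χ := χ) hψ ha (neg_ne_zero.mpr hb)
  rw [← card_mul_card_diagonal_sub_eq hψ hχ ha hb] at bound
  simp only [hχ, Nat.card_units, Nat.card_eq_fintype_card (α := F),
    Nat.gcd_comm (Fintype.card F - 1)] at bound
  refine abs_sub_one_div_mul_le (by exact_mod_cast Fintype.card_pos) ?_
  rw [← Real.norm_eq_abs, ← Complex.norm_real]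
  push_cast
  exact bound

end Diagonal

end FiniteField

lemma mul_sum_range_sum_powersetCard {R : Type*} [CommRing R] {n : ℕ} (c : Fin n → R) (x : R) :
    x * ∑ e ∈ range n, ∑ S ∈ powersetCard (n - e) (univ : Finset (Fin n)),
        (∏ j ∈ S, c j) * x ^ (n - e - 1)
      = ∏ j, (1 + c j * x) - 1 := by
  rw [prod_one_add, sum_powerset, card_univ, Fintype.card_fin, sum_range_succ',
    powersetCard_zero, sum_singleton, prod_empty, add_sub_cancel_right, mul_sum,
    ← sum_range_reflect]
  refine sum_congr rfl fun e he => ?_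
  rw [show n - (n - 1 - e) = e + 1 by have := mem_range.mp he; omega, mul_sum]
  refine sum_congr rfl fun S hS => ?_
  rw [prod_mul_distrib, prod_const, (mem_powersetCard.mp hS).2, Nat.add_sub_cancel, pow_succ]
  ring

theorem diagonal_equation_estimate_general {F : Type*} [Field F] [Fintype F] {n : ℕ}
    (d : Fin n → ℕ) (a : Fin n → F) (ha : ∀ i, a i ≠ 0)
    (b : F) (hb : b ≠ 0) :
    (|(((Finset.univ.filter fun x : Fin n → F =>
              (∀ i, x i ≠ 0) ∧ ∑ i, a i * x i ^ d i = b).card : ℝ))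
          - (1 / (Fintype.card F : ℝ)) *
              (((Fintype.card F : ℝ) - 1) ^ n - (-1 : ℝ) ^ n)|
        ≤ ∑ e ∈ Finset.range n,
            ∑ S ∈ Finset.powersetCard (n - e) (Finset.univ : Finset (Fin n)),
              (∏ j ∈ S, ((Nat.gcd (d j) (Fintype.card F - 1) : ℝ) - 1)) *
                Real.sqrt (Fintype.card F) ^ (n - e - 1)) ∧
      ∀ m : ℕ, (∀ i, d i = m) → m ∣ Fintype.card F - 1 →
        |(((Finset.univ.filter fun x : Fin n → F =>
                (∀ i, x i ≠ 0) ∧ ∑ i, a i * x i ^ d i = b).card : ℝ))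
            - (1 / (Fintype.card F : ℝ)) *
                (((Fintype.card F : ℝ) - 1) ^ n - (-1 : ℝ) ^ n)|
          < (1 + ((m : ℝ) - 1) * Real.sqrt (Fintype.card F)) ^ n /
              Real.sqrt (Fintype.card F) := by
  have hsq : 0 < √(Fintype.card F : ℝ) := Real.sqrt_pos.mpr (by exact_mod_cast Fintype.card_pos)
  refine (and_iff_left_of_imp fun hle m hm hmd => hle.trans_lt ?_).mpr ?_
  · have hest := abs_card_diagonal_sub_le d ha hb
    rw [Fintype.card_fin] at hest
    -- `convert` also reconciles the decidability instance of `∀ i : Fin n` in the statement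
    -- with the one of `∀ i : ι` in `abs_card_diagonal_sub_le`.
    convert hest.trans_eq (eq_div_of_mul_eq hsq.ne' ((mul_comm _ _).trans
      (mul_sum_range_sum_powersetCard _ _))).symm
  · have hgcd : ∀ i, Nat.gcd (d i) (Fintype.card F - 1) = m := fun i => by
      rw [hm, Nat.gcd_eq_left hmd]
    rw [lt_div_iff₀ hsq, mul_comm, mul_sum_range_sum_powersetCard]
    simp only [hgcd, prod_const, card_univ, Fintype.card_fin]
    exact sub_one_lt _

theorem diagonal_equation_estimate {F : Type*} [Field F] [Fintype F] {n : ℕ}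
    (d : Fin n → ℕ) (hd : ∀ i, 0 < d i) (a : Fin n → F) (ha : ∀ i, a i ≠ 0)
    (b : F) (hb : b ≠ 0) :
    (|(((Finset.univ.filter fun x : Fin n → F =>
              (∀ i, x i ≠ 0) ∧ ∑ i, a i * x i ^ d i = b).card : ℝ))
          - (1 / (Fintype.card F : ℝ)) *
              (((Fintype.card F : ℝ) - 1) ^ n - (-1 : ℝ) ^ n)|
        ≤ ∑ e ∈ Finset.range n,
            ∑ S ∈ Finset.powersetCard (n - e) (Finset.univ : Finset (Fin n)),
              (∏ j ∈ S, ((Nat.gcd (d j) (Fintype.card F - 1) : ℝ) - 1)) *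
                Real.sqrt (Fintype.card F) ^ (n - e - 1)) ∧
      ∀ m : ℕ, (∀ i, d i = m) → m ∣ Fintype.card F - 1 →
        |(((Finset.univ.filter fun x : Fin n → F =>
                (∀ i, x i ≠ 0) ∧ ∑ i, a i * x i ^ d i = b).card : ℝ))
            - (1 / (Fintype.card F : ℝ)) *
                (((Fintype.card F : ℝ) - 1) ^ n - (-1 : ℝ) ^ n)|
          < (1 + ((m : ℝ) - 1) * Real.sqrt (Fintype.card F)) ^ n /
              Real.sqrt (Fintype.card F) :=
  diagonal_equation_estimate_general d a ha b hb
end
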